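/- arXiv:0906.3012 — 4 statements merged into one kernel-verified Lean document; each statement's English description precedes it below -/
import Mathlib

section
/- Let M be a d×d matrix whose entries are homogeneous linear forms in variables x₀,…,xₙ over an algebraically closed field k, with f = det(M) not identically zero. Then for every point pt of the projective hypersurface X = {f = 0}, the corank of the evaluated matrix M|_pt satisfies 1 ≤ corank(M|_pt) ≤ mult(X, pt), where mult(X,pt) is the multiplicity of the hypersurface at pt (the order of vanishing of f at pt). -/
/-!
Because the entries of `M` are linear forms, the restriction of `det M` to the line `pt + t • v`
is `det (A + t • B)` with `A = M(pt)` and `B = M(v)`. If the columns of an invertible matrix `Q`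
include a basis of `ker A`, then `corank A` columns of `(A + t • B) * Q` are divisible by `t`, so
`t ^ corank A` divides `det (A + t • B)` for every direction `v`. As `det M ≠ 0`, some direction
gives a nonzero restriction, hence `mult(X, pt) ≥ corank A`; and `corank A ≥ 1` since
`det A = 0`.
-/

open Polynomial

/-- The multiplicity of the hypersurface `{f = 0}` at the point `pt`: the minimal order of
vanishing at `t = 0` of `t ↦ f(pt + t·v)` over all directions `v`. -/
noncomputable def multiplicityAt {k : Type*} [Field k] {n : ℕ}
    (f : MvPolynomial (Fin n) k) (pt : Fin n → k) : ℕ :=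
  sInf {m : ℕ | ∃ v : Fin n → k,
    (MvPolynomial.aeval
      (fun i => Polynomial.C (pt i) + Polynomial.X * Polynomial.C (v i)) f).coeff m ≠ 0}

theorem Module.Basis.sumExtend_inl {K V ι : Type*} [Field K] [AddCommGroup V] [Module K V]
    {v : ι → V} (hs : LinearIndependent K v) (i : ι) : sumExtend hs (Sum.inl i) = v i := by
  simp [sumExtend]; rfl

namespace Matrix

variable {K : Type*} [Field K] {m n : Type*} [Fintype n]

theorem finrank_ker_mulVecLin (A : Matrix m n K) :
    Module.finrank K (LinearMap.ker A.mulVecLin) = Fintype.card n - A.rank := by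
  have := LinearMap.finrank_range_add_finrank_ker A.mulVecLin
  rw [Module.finrank_fintype_fun_eq_card] at this
  rw [rank]
  omega

variable [DecidableEq n]

theorem one_le_card_sub_rank_of_det_eq_zero {A : Matrix n n K} (h : A.det = 0) :
    1 ≤ Fintype.card n - A.rank := by
  obtain ⟨v, hv, hAv⟩ := exists_mulVec_eq_zero_iff.mpr h
  rw [← finrank_ker_mulVecLin, Nat.one_le_iff_ne_zero, Ne, Submodule.finrank_eq_zero]
  exact fun hker => hv ((Submodule.eq_bot_iff _).mp hker v hAv)

theorem exists_isUnit_det_mul_col_eq_zero (A : Matrix m n K) :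
    ∃ (Q : Matrix n n K) (s : Finset n), IsUnit Q.det ∧ s.card = Fintype.card n - A.rank ∧
      ∀ j ∈ s, ∀ i, (A * Q) i j = 0 := by
  let bK := Module.finBasis K (LinearMap.ker A.mulVecLin)
  have hK : LinearIndependent K ((LinearMap.ker A.mulVecLin).subtype ∘ bK) :=
    bK.linearIndependent.map' _ (Submodule.ker_subtype _)
  let b := Module.Basis.sumExtend hK
  let e := b.indexEquiv (Pi.basisFun K n)
  let Q : Matrix n n K := of fun i j => b (e.symm j) i
  have hQ : Q.col = b ∘ e.symm := rfl
  refine ⟨Q, Finset.univ.map (Function.Embedding.inl.trans e.toEmbedding), ?_, ?_, ?_⟩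
  · rw [← isUnit_iff_isUnit_det, ← linearIndependent_cols_iff_isUnit, hQ]
    exact b.linearIndependent.comp _ e.symm.injective
  · simp [finrank_ker_mulVecLin]
  · simp only [Finset.mem_map, Finset.mem_univ, true_and]
    rintro _ ⟨l, rfl⟩ i
    have hcol : Q.col (e (Sum.inl l)) = bK l := by
      rw [hQ, Function.comp_apply, Equiv.symm_apply_apply, Module.Basis.sumExtend_inl]
      rfl
    have hker : A *ᵥ (bK l : n → K) = 0 := (bK l).2
    rw [← hcol] at hker
    exact congrFun hker i

theorem pow_card_dvd_det_of_dvd_col {R : Type*} [CommRing R] (N : Matrix n n R) {a : R}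
    {s : Finset n} (h : ∀ j ∈ s, ∀ i, a ∣ N i j) : a ^ s.card ∣ N.det := by
  choose q hq using h
  let W : Matrix n n R := of fun i j => if hj : j ∈ s then q j hj i else N i j
  have hN : N = of fun i j => (if j ∈ s then a else 1) * W i j := by
    ext i j
    by_cases hj : j ∈ s <;> simp [W, hj, ← hq]
  rw [hN, det_mul_row, Fintype.prod_ite_mem, Finset.prod_const]
  exact dvd_mul_right _ _

theorem X_pow_card_sub_rank_dvd_det (A B : Matrix n n K) :
    (X : K[X]) ^ (Fintype.card n - A.rank) ∣ (of fun i j => C (A i j) + X * C (B i j)).det := by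
  obtain ⟨Q, s, hQ, hs, hAQ⟩ := exists_isUnit_det_mul_col_eq_zero A
  set N : Matrix n n K[X] := of fun i j => C (A i j) + X * C (B i j)
  have hNQ : N * Q.map C = of fun i j => C ((A * Q) i j) + X * C ((B * Q) i j) := by
    refine Matrix.ext fun i j => ?_
    simp only [N, mul_apply, of_apply, map_apply, map_sum, map_mul, add_mul,
      Finset.sum_add_distrib, Finset.mul_sum, mul_assoc]
  have hdvd : X ^ s.card ∣ (N * Q.map C).det :=
    pow_card_dvd_det_of_dvd_col _ fun j hj i => by simp [hNQ, hAQ j hj i]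
  rwa [det_mul, ← RingHom.mapMatrix_apply, ← RingHom.map_det, hs,
    IsUnit.dvd_mul_right (hQ.map C)] at hdvd

end Matrix

namespace MvPolynomial

theorem IsHomogeneous.aeval_C_add_X_mul_C {σ R : Type*} [CommSemiring R]
    {p : MvPolynomial σ R} (hp : p.IsHomogeneous 1) (x v : σ → R) :
    MvPolynomial.aeval (fun i => Polynomial.C (x i) + Polynomial.X * Polynomial.C (v i)) p =
      Polynomial.C (eval x p) + Polynomial.X * Polynomial.C (eval v p) := by
  rw [← mem_homogeneousSubmodule, homogeneousSubmodule_one_eq_span_X] at hp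
  induction hp using Submodule.span_induction with
  | mem _ h => obtain ⟨i, rfl⟩ := h; simp
  | zero => simp
  | add p q _ _ hp hq => simp only [map_add, hp, hq]; ring
  | smul r p _ hp =>
    simp only [map_smul, hp, smul_eval, smul_add, Polynomial.smul_eq_C_mul, map_mul]; ring

theorem exists_aeval_C_add_X_mul_C_ne_zero {σ R : Type*} [CommRing R] [IsDomain R]
    [Infinite R] {f : MvPolynomial σ R} (hf : f ≠ 0) (x : σ → R) :
    ∃ v : σ → R,
      aeval (fun i => Polynomial.C (x i) + Polynomial.X * Polynomial.C (v i)) f ≠ 0 := by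
  obtain ⟨w, hw⟩ : ∃ w, eval w f ≠ 0 := by
    by_contra! h
    exact hf (funext fun w => by rw [h w, map_zero])
  refine ⟨w - x, fun h => hw ?_⟩
  have := congrArg (Polynomial.aeval (1 : R)) h
  rw [← AlgHom.comp_apply, comp_aeval] at this
  simpa using this

end MvPolynomial

theorem le_multiplicityAt {k : Type*} [Field k] [Infinite k] {n c : ℕ}
    {f : MvPolynomial (Fin n) k} (hf : f ≠ 0) (pt : Fin n → k)
    (h : ∀ v : Fin n → k, X ^ c ∣
      MvPolynomial.aeval (fun i => C (pt i) + X * C (v i)) f) :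
    c ≤ multiplicityAt f pt := by
  obtain ⟨v, hv⟩ := MvPolynomial.exists_aeval_C_add_X_mul_C_ne_zero hf pt
  obtain ⟨m, hm⟩ := Polynomial.support_nonempty.mpr hv
  refine le_csInf ⟨m, v, Polynomial.mem_support_iff.mp hm⟩ fun m ⟨v, hv⟩ => ?_
  by_contra! hm
  exact hv (X_pow_dvd_iff.mp (h v) m hm)

theorem stmt1_general {k : Type*} [Field k] [CharZero k] {d n : ℕ}
    (M : Matrix (Fin d) (Fin d) (MvPolynomial (Fin (n + 1)) k))
    (hlin : ∀ i j, (M i j).IsHomogeneous 1)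
    (hdet : M.det ≠ 0)
    (pt : Fin (n + 1) → k)
    (hX : MvPolynomial.eval pt M.det = 0) :
    1 ≤ d - (M.map (MvPolynomial.eval pt)).rank ∧
    d - (M.map (MvPolynomial.eval pt)).rank ≤ multiplicityAt M.det pt := by
  set A := M.map (MvPolynomial.eval pt)
  have hA : A.det = 0 := by rw [← hX, RingHom.map_det]; rfl
  refine ⟨by simpa using Matrix.one_le_card_sub_rank_of_det_eq_zero hA,
    le_multiplicityAt hdet pt fun v => ?_⟩
  have hline : (MvPolynomial.aeval fun i => C (pt i) + X * C (v i)).mapMatrix M =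
      .of fun i j => C (A i j) + X * C (M.map (MvPolynomial.eval v) i j) :=
    Matrix.ext fun i j => (hlin i j).aeval_C_add_X_mul_C pt v
  rw [AlgHom.map_det, hline]
  simpa using Matrix.X_pow_card_sub_rank_dvd_det A (M.map (MvPolynomial.eval v))

/-- for a determinantal representation by linear forms,
1 ≤ corank(M|_pt) ≤ mult(X, pt) at every point pt of the hypersurface X = {det M = 0}. -/
theorem stmt1 {k : Type*} [Field k] [IsAlgClosed k] [CharZero k] {d n : ℕ}
    (M : Matrix (Fin d) (Fin d) (MvPolynomial (Fin (n + 1)) k))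
    (hlin : ∀ i j, (M i j).IsHomogeneous 1)
    (hdet : M.det ≠ 0)
    (pt : Fin (n + 1) → k) (hpt : pt ≠ 0)
    (hX : MvPolynomial.eval pt M.det = 0) :
    1 ≤ d - (M.map (MvPolynomial.eval pt)).rank ∧
    d - (M.map (MvPolynomial.eval pt)).rank ≤ multiplicityAt M.det pt :=
  stmt1_general M hlin hdet pt hX
end

section
/- (Noether AF+BG for the plane, weak form) Let F, G ∈ k[x₀, x₁, x₂] be homogeneous polynomials with no common factor, and H a homogeneous polynomial such that at every point of ℙ² the element H lies in the ideal generated by F and G in the local ring. Then H = AF + BG for homogeneous polynomials A, B of the appropriate degrees. -/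
/-! By the Nullstellensatz, the hypothesis says that the ideal `(F, G) : H` has no zero in `k³`
except the origin, so it contains a power of the irrelevant ideal `m = (X₀, X₁, X₂)`. Because `F`
and `G` are coprime and `X₀, X₁, X₂` is a regular sequence, a Koszul computation shows that
`(F, G) : m = (F, G)`; iterating, `H ∈ (F, G)`. Taking homogeneous components of degree `c` of
`H = A F + B G` makes `A` and `B` homogeneous. -/

open MvPolynomial

theorem IsRelPrime.exists_eq_of_mul_add_mul_eq_zero {R : Type*} [CommRing R] [IsDomain R]
    [DecompositionMonoid R] {F G a b : R} (hcop : IsRelPrime F G) (hF : F ≠ 0)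
    (h : a * F + b * G = 0) : ∃ c, b = F * c ∧ a = -(G * c) := by
  obtain ⟨c, rfl⟩ : F ∣ b := hcop.dvd_of_dvd_mul_right ⟨-a, by linear_combination h⟩
  exact ⟨c, rfl, mul_right_cancel₀ hF (by linear_combination h)⟩

theorem Ideal.mem_of_pow_le_colon {R : Type*} [CommSemiring R] {J M : Ideal R}
    (hJ : J.colon (M : Set R) ≤ J) {r : R} {n : ℕ} (hn : M ^ n ≤ J.colon {r}) : r ∈ J := by
  induction n with
  | zero =>
    simpa only [Submodule.mem_colon_singleton, one_smul] using
      hn (show (1 : R) ∈ M ^ 0 by simp)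
  | succ n ih =>
    refine ih fun s hs => Submodule.mem_colon_singleton.2 (hJ ?_)
    refine Submodule.mem_colon.2 fun m hm => ?_
    have := Submodule.mem_colon_singleton.1 (hn (pow_succ M n ▸ Ideal.mul_mem_mul hs hm))
    simpa only [smul_eq_mul, mul_right_comm s r m] using this

namespace MvPolynomial

variable {σ R : Type*}

theorem mem_ideal_span_X_image_of_X_mul_mem [CommSemiring R] {i : σ} {s : Set σ} (hi : i ∉ s)
    {p : MvPolynomial σ R} (h : X i * p ∈ Ideal.span (X '' s : Set (MvPolynomial σ R))) :
    p ∈ Ideal.span (X '' s : Set (MvPolynomial σ R)) := by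
  rw [mem_ideal_span_X_image] at h ⊢
  intro m hm
  obtain ⟨j, hjs, hj⟩ := h (Finsupp.single i 1 + m) (by
    rw [support_X_mul]
    exact Finset.mem_map_of_mem _ hm)
  have hij : i ≠ j := fun e => hi (e ▸ hjs)
  exact ⟨j, hjs, by simpa [Finsupp.single_apply, hij] using hj⟩

theorem X_dvd_of_X_mul_eq_X_mul [CommRing R] [IsDomain R] {i j : σ} (hij : i ≠ j)
    {p q : MvPolynomial σ R} (h : X i * p = X j * q) : X j ∣ p := by
  have hX : ¬ (X j : MvPolynomial σ R) ∣ X i := by rw [X_dvd_X]; exact hij.symm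
  exact (X_prime.dvd_or_dvd ⟨q, h⟩).resolve_left hX

variable {k : Type*} [Field k]

theorem mem_span_pair_of_X_mul_mem {F G w : MvPolynomial σ k} (hF : F ≠ 0)
    (hcop : IsRelPrime F G) {i j l : σ} (hij : i ≠ j) (hil : i ≠ l) (hjl : j ≠ l)
    (hi : X i * w ∈ Ideal.span {F, G}) (hj : X j * w ∈ Ideal.span {F, G})
    (hl : X l * w ∈ Ideal.span {F, G}) : w ∈ Ideal.span {F, G} := by
  rw [Ideal.mem_span_pair] at hi hj hl ⊢
  obtain ⟨ai, bi, ei⟩ := hi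
  obtain ⟨aj, bj, ej⟩ := hj
  obtain ⟨al, bl, el⟩ := hl
  obtain ⟨cij, hbij, haij⟩ := hcop.exists_eq_of_mul_add_mul_eq_zero hF
    (a := X j * ai - X i * aj) (b := X j * bi - X i * bj)
    (by linear_combination X j * ei - X i * ej)
  obtain ⟨cil, hbil, -⟩ := hcop.exists_eq_of_mul_add_mul_eq_zero hF
    (a := X l * ai - X i * al) (b := X l * bi - X i * bl)
    (by linear_combination X l * ei - X i * el)
  obtain ⟨cjl, hbjl, -⟩ := hcop.exists_eq_of_mul_add_mul_eq_zero hF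
    (a := X l * aj - X j * al) (b := X l * bj - X j * bl)
    (by linear_combination X l * ej - X j * el)
  -- Koszul cocycle relation `X l * cij = X j * cil - X i * cjl`; `X l` is regular mod `(X i, X j)`.
  have hcij : cij ∈ Ideal.span (X '' {i, j} : Set (MvPolynomial σ k)) := by
    refine mem_ideal_span_X_image_of_X_mul_mem (i := l) (by simp [hil.symm, hjl.symm]) ?_
    rw [Set.image_pair, Ideal.mem_span_pair]
    refine ⟨-cjl, cil, mul_left_cancel₀ hF ?_⟩
    linear_combination X l * hbij - X j * hbil + X i * hbjl
  rw [Set.image_pair, Ideal.mem_span_pair] at hcij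
  obtain ⟨p, q, hpq⟩ := hcij
  obtain ⟨B, hB⟩ := X_dvd_of_X_mul_eq_X_mul hij.symm (p := bi - F * q) (q := bj + F * p)
    (by linear_combination hbij - F * hpq)
  obtain ⟨A, hA⟩ := X_dvd_of_X_mul_eq_X_mul hij.symm (p := ai + G * q) (q := aj - G * p)
    (by linear_combination haij + G * hpq)
  exact ⟨A, B, mul_left_cancel₀ (X_ne_zero i) (by linear_combination ei - F * hA - G * hB)⟩

theorem span_range_X_le_radical [IsAlgClosed k] [Finite σ] {I : Ideal (MvPolynomial σ k)}
    (h : zeroLocus k I ⊆ {0}) : Ideal.span (Set.range X) ≤ I.radical := by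
  rw [Ideal.span_le, Set.range_subset_iff]
  intro i
  rw [SetLike.mem_coe, ← vanishingIdeal_zeroLocus_eq_radical (K := k)]
  intro x hx
  simp [Set.mem_singleton_iff.1 (h hx)]

theorem colon_range_X_le {F G : MvPolynomial (Fin 3) k} (hF : F ≠ 0) (hcop : IsRelPrime F G) :
    (Ideal.span {F, G}).colon (Set.range X) ≤ Ideal.span {F, G} := by
  intro w hw
  rw [Submodule.mem_colon] at hw
  have hX (i : Fin 3) : X i * w ∈ Ideal.span {F, G} := mul_comm w (X i) ▸ hw _ ⟨i, rfl⟩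
  exact mem_span_pair_of_X_mul_mem hF hcop (i := 0) (j := 1) (l := 2) (by decide) (by decide)
    (by decide) (hX 0) (hX 1) (hX 2)

attribute [local instance] gradedAlgebra in
theorem homogeneousComponent_mul_of_isHomogeneous [CommSemiring R] {F : MvPolynomial σ R}
    {a : ℕ} (hF : F.IsHomogeneous a) (p : MvPolynomial σ R) (n : ℕ) :
    homogeneousComponent n (p * F) = if a ≤ n then homogeneousComponent (n - a) p * F else 0 := by
  simp only [← decomposition.decompose'_apply]
  exact DirectSum.coe_decompose_mul_of_right_mem (homogeneousSubmodule σ R) n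
    ((mem_homogeneousSubmodule a F).2 hF)

theorem exists_isHomogeneous_of_mem_span_pair [CommSemiring R] {F G H : MvPolynomial σ R}
    {a b c : ℕ} (hF : F.IsHomogeneous a) (hG : G.IsHomogeneous b) (hH : H.IsHomogeneous c)
    (h : H ∈ Ideal.span {F, G}) :
    ∃ A B : MvPolynomial σ R,
      A.IsHomogeneous (c - a) ∧ B.IsHomogeneous (c - b) ∧ H = A * F + B * G := by
  obtain ⟨A, B, rfl⟩ := Ideal.mem_span_pair.1 h
  refine ⟨if a ≤ c then homogeneousComponent (c - a) A else 0,
    if b ≤ c then homogeneousComponent (c - b) B else 0, ?_, ?_, ?_⟩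
  · split_ifs
    exacts [homogeneousComponent_isHomogeneous _ _, isHomogeneous_zero _ _ _]
  · split_ifs
    exacts [homogeneousComponent_isHomogeneous _ _, isHomogeneous_zero _ _ _]
  · rw [← homogeneousComponent_eq_self hH, map_add, homogeneousComponent_mul_of_isHomogeneous hF,
      homogeneousComponent_mul_of_isHomogeneous hG, ite_mul, ite_mul, zero_mul, zero_mul]

end MvPolynomial

theorem stmt14_general {k : Type*} [Field k] [IsAlgClosed k]
    (F G H : MvPolynomial (Fin 3) k) {a b c : ℕ}
    (hF : F.IsHomogeneous a) (hG : G.IsHomogeneous b) (hH : H.IsHomogeneous c)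
    (hF0 : F ≠ 0)
    (hcop : ∀ p : MvPolynomial (Fin 3) k, p ∣ F → p ∣ G → IsUnit p)
    (hloc : ∀ pt : Fin 3 → k, pt ≠ 0 → ∃ u : MvPolynomial (Fin 3) k,
      MvPolynomial.eval pt u ≠ 0 ∧ u * H ∈ Ideal.span {F, G}) :
    ∃ A B : MvPolynomial (Fin 3) k,
      A.IsHomogeneous (c - a) ∧ B.IsHomogeneous (c - b) ∧ H = A * F + B * G := by
  set J := Ideal.span {F, G}
  have hzero : zeroLocus k (J.colon {H}) ⊆ {0} := by
    intro pt hpt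
    by_contra hpt0
    obtain ⟨u, hu, huH⟩ := hloc pt hpt0
    exact hu (by simpa using hpt u (Submodule.mem_colon_singleton.2 huH))
  obtain ⟨n, hn⟩ := Ideal.exists_pow_le_of_le_radical_of_fg (span_range_X_le_radical hzero)
    (Submodule.fg_span (Set.finite_range X))
  exact exists_isHomogeneous_of_mem_span_pair hF hG hH
    (Ideal.mem_of_pow_le_colon (by rw [Ideal.colon_span]; exact colon_range_X_le hF0 hcop) hn)

/-- Noether AF+BG, weak form for the plane: if H lies in the ideal generated
by the coprime homogeneous polynomials F, G in the local ring at every point of ℙ², then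
H = AF + BG globally, with A, B homogeneous of the appropriate degrees. -/
theorem stmt14 {k : Type*} [Field k] [IsAlgClosed k] [CharZero k]
    (F G H : MvPolynomial (Fin 3) k) {a b c : ℕ}
    (hF : F.IsHomogeneous a) (hG : G.IsHomogeneous b) (hH : H.IsHomogeneous c)
    (hF0 : F ≠ 0) (hG0 : G ≠ 0)
    (hcop : ∀ p : MvPolynomial (Fin 3) k, p ∣ F → p ∣ G → IsUnit p)
    (hloc : ∀ pt : Fin 3 → k, pt ≠ 0 → ∃ u : MvPolynomial (Fin 3) k,
      MvPolynomial.eval pt u ≠ 0 ∧ u * H ∈ Ideal.span {F, G}) :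
    ∃ A B : MvPolynomial (Fin 3) k,
      A.IsHomogeneous (c - a) ∧ B.IsHomogeneous (c - b) ∧ H = A * F + B * G :=
  stmt14_general F G H hF hG hH hF0 hcop hloc
end

section
/- Let M be a d×d matrix of homogeneous linear forms over a field k with det(M) = f₁ · f₂ where f₁, f₂ are coprime homogeneous polynomials of degrees d₁, d₂ (d₁ + d₂ = d). Suppose the adjugate decomposes as M^∨ = f₂N₁ + f₁N₂ where Nα is a matrix of homogeneous polynomials of degree dα − 1. Then M·N₁ = f₁A₁ and M·N₂ = f₂A₂ for constant matrices A₁, A₂ ∈ Mat(d×d, k) satisfying A₁ + A₂ = 1 and A₁A₂ = 0 = A₂A₁. -/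
/-!
Multiplying `M^∨ = f₂ N₁ + f₁ N₂` by `M` gives `f₂ (M N₁) + f₁ (M N₂) = f₁ f₂ · 1`, so by
coprimality `f₂` divides every entry of `M N₂`. If `d₂ ≥ 1` these entries have degree `d₂`, so
`M N₂ = f₂ A` with `A` constant, and then `M N₁ = f₁ (1 - A)`. The same argument applied to
`M^∨ M = f₁ f₂ · 1` shows that `f₂` divides every entry of `N₂ M N₁ = f₁ N₂ (1 - A)`, hence of
`N₂ (1 - A)`, whose entries have degree `d₂ - 1 < d₂`; so `N₂ (1 - A) = 0` and
`f₂ A (1 - A) = M N₂ (1 - A) = 0`. The case `d₁ ≥ 1` is symmetric, and `d₁ = d₂ = 0` forces `d = 0`.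
-/

open MvPolynomial

namespace MvPolynomial.IsHomogeneous

variable {σ R : Type*} [CommRing R] [IsDomain R] {f p : MvPolynomial σ R} {a b : ℕ}

theorem eq_zero_of_dvd_of_lt (hf : f.IsHomogeneous a) (hf0 : f ≠ 0)
    (hp : p.IsHomogeneous b) (hba : b < a) (hdvd : f ∣ p) : p = 0 := by
  by_contra hp0
  have hle := totalDegree_le_of_dvd_of_isDomain hdvd hp0
  rw [hf.totalDegree hf0, hp.totalDegree hp0] at hle
  omega

theorem exists_eq_C_mul_of_dvd (hf : f.IsHomogeneous a) (hf0 : f ≠ 0)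
    (hp : p.IsHomogeneous a) (hdvd : f ∣ p) : ∃ c : R, p = C c * f := by
  obtain ⟨q, rfl⟩ := hdvd
  rcases eq_or_ne q 0 with rfl | hq0
  · exact ⟨0, by simp⟩
  have hdeg := totalDegree_mul_of_isDomain hf0 hq0
  rw [hf.totalDegree hf0, hp.totalDegree (mul_ne_zero hf0 hq0)] at hdeg
  refine ⟨q.coeff 0, ?_⟩
  rw [mul_comm, ← totalDegree_eq_zero_iff_eq_C.1 (by omega)]

end MvPolynomial.IsHomogeneous

namespace Matrix

theorem dvd_apply_of_smul_add_smul_eq {n R : Type*} [DecidableEq n] [CommRing R]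
    [DecompositionMonoid R] {f₁ f₂ : R} {X Y : Matrix n n R} (hrel : IsRelPrime f₁ f₂)
    (h : f₂ • X + f₁ • Y = (f₁ * f₂) • 1) (i j : n) : f₂ ∣ Y i j := by
  refine hrel.symm.dvd_of_dvd_mul_left ⟨f₁ * (1 : Matrix n n R) i j - X i j, ?_⟩
  have hij := congrFun₂ h i j
  simp only [add_apply, smul_apply, smul_eq_mul] at hij
  linear_combination hij

theorem isHomogeneous_mul_apply {σ l m o R : Type*} [Fintype m] [CommRing R]
    {P : Matrix l m (MvPolynomial σ R)} {Q : Matrix m o (MvPolynomial σ R)} {a b : ℕ}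
    (hP : ∀ i j, (P i j).IsHomogeneous a) (hQ : ∀ i j, (Q i j).IsHomogeneous b) (i : l) (j : o) :
    ((P * Q) i j).IsHomogeneous (a + b) := by
  rw [mul_apply]
  exact IsHomogeneous.sum _ _ _ fun l _ => (hP i l).mul (hQ l j)

variable {σ n R : Type*} [Fintype n] [DecidableEq n] [CommRing R] [IsDomain R]
  [UniqueFactorizationMonoid R]
  {f₁ f₂ : MvPolynomial σ R} {e : ℕ} {M N₁ N₂ X Y : Matrix n n (MvPolynomial σ R)}

theorem exists_eq_smul_map_C_of_smul_add_smul_eq (hrel : IsRelPrime f₁ f₂) (hf₂0 : f₂ ≠ 0)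
    (hf₂ : f₂.IsHomogeneous e) (hY : ∀ i j, (Y i j).IsHomogeneous e)
    (h : f₂ • X + f₁ • Y = (f₁ * f₂) • 1) :
    ∃ A : Matrix n n R, X = f₁ • (1 - A).map C ∧ Y = f₂ • A.map C := by
  choose A hA using fun i j =>
    hf₂.exists_eq_C_mul_of_dvd hf₂0 (hY i j) (dvd_apply_of_smul_add_smul_eq hrel h i j)
  have hY' : Y = f₂ • (of A).map C := by
    ext i j
    rw [hA i j, smul_apply, map_apply, of_apply, smul_eq_mul, mul_comm]
  refine ⟨of A, smul_right_injective _ hf₂0 ?_, hY'⟩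
  rw [hY'] at h
  rw [Matrix.map_sub _ (_root_.map_sub C), Matrix.map_one _ (_root_.map_zero C) (_root_.map_one C)]
  linear_combination (norm := module) h

theorem mul_map_C_eq_zero (hrel : IsRelPrime f₁ f₂) (hf₂0 : f₂ ≠ 0)
    (hf₂ : f₂.IsHomogeneous e) (he : 0 < e) (hN₂ : ∀ i j, (N₂ i j).IsHomogeneous (e - 1))
    (hl : f₂ • (N₁ * M) + f₁ • (N₂ * M) = (f₁ * f₂) • 1) {B : Matrix n n R}
    (hB : M * N₁ = f₁ • B.map C) : N₂ * B.map C = 0 := by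
  have hassoc : f₁ • (N₂ * B.map C) = N₂ * M * N₁ := by
    rw [Matrix.mul_assoc, hB, Matrix.mul_smul]
  refine Matrix.ext fun i j => ?_
  refine hf₂.eq_zero_of_dvd_of_lt hf₂0
    (by simpa using isHomogeneous_mul_apply (Q := B.map C) hN₂ (fun _ _ => isHomogeneous_C σ _) i j)
    (Nat.sub_lt he one_pos) (hrel.symm.dvd_of_dvd_mul_left ?_)
  rw [← smul_eq_mul, ← smul_apply, hassoc, mul_apply]
  exact Finset.dvd_sum fun l _ => (dvd_apply_of_smul_add_smul_eq hrel hl i l).mul_right _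

theorem exists_complementary_idempotents (hrel : IsRelPrime f₁ f₂) (hf₂0 : f₂ ≠ 0)
    (hf₂ : f₂.IsHomogeneous e) (he : 0 < e) (hM : ∀ i j, (M i j).IsHomogeneous 1)
    (hN₂ : ∀ i j, (N₂ i j).IsHomogeneous (e - 1))
    (hr : M * (f₂ • N₁ + f₁ • N₂) = (f₁ * f₂) • 1)
    (hl : (f₂ • N₁ + f₁ • N₂) * M = (f₁ * f₂) • 1) :
    ∃ A₁ A₂ : Matrix n n R, M * N₁ = f₁ • A₁.map C ∧ M * N₂ = f₂ • A₂.map C ∧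
      A₁ + A₂ = 1 ∧ A₁ * A₂ = 0 ∧ A₂ * A₁ = 0 := by
  rw [Matrix.mul_add, Matrix.mul_smul, Matrix.mul_smul] at hr
  rw [Matrix.add_mul, Matrix.smul_mul, Matrix.smul_mul] at hl
  have hMN₂ : ∀ i j, ((M * N₂) i j).IsHomogeneous e := by
    simpa [Nat.add_sub_cancel' he] using isHomogeneous_mul_apply hM hN₂
  obtain ⟨A, hX, hY⟩ := exists_eq_smul_map_C_of_smul_add_smul_eq hrel hf₂0 hf₂ hMN₂ hr
  have hNA := mul_map_C_eq_zero hrel hf₂0 hf₂ he hN₂ hl hX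
  have hidem : A * (1 - A) = 0 := by
    refine map_injective (C_injective σ R) (smul_right_injective _ hf₂0 ?_)
    calc f₂ • (A * (1 - A)).map C = M * N₂ * (1 - A).map C := by
          rw [hY, Matrix.map_mul, Matrix.smul_mul]
      _ = f₂ • (0 : Matrix n n R).map C := by rw [Matrix.mul_assoc, hNA]; simp
  refine ⟨1 - A, A, hX, hY, sub_add_cancel 1 A, ?_, hidem⟩
  rw [← hidem, sub_mul, mul_sub, one_mul, mul_one]

end Matrix

theorem stmt15_general {k : Type*} [Field k] {n d d₁ d₂ : ℕ}
    (M : Matrix (Fin d) (Fin d) (MvPolynomial (Fin (n + 1)) k))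
    (hlin : ∀ i j, (M i j).IsHomogeneous 1)
    (f₁ f₂ : MvPolynomial (Fin (n + 1)) k)
    (hf₁ : f₁.IsHomogeneous d₁) (hf₂ : f₂.IsHomogeneous d₂)
    (hf₁0 : f₁ ≠ 0) (hf₂0 : f₂ ≠ 0) (hdd : d₁ + d₂ = d)
    (hcop : ∀ p : MvPolynomial (Fin (n + 1)) k, p ∣ f₁ → p ∣ f₂ → IsUnit p)
    (hdet : M.det = f₁ * f₂)
    (N₁ N₂ : Matrix (Fin d) (Fin d) (MvPolynomial (Fin (n + 1)) k))
    (hN₁ : ∀ i j, (N₁ i j).IsHomogeneous (d₁ - 1))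
    (hN₂ : ∀ i j, (N₂ i j).IsHomogeneous (d₂ - 1))
    (hadj : M.adjugate = f₂ • N₁ + f₁ • N₂) :
    ∃ A₁ A₂ : Matrix (Fin d) (Fin d) k,
      M * N₁ = f₁ • (A₁.map MvPolynomial.C) ∧
      M * N₂ = f₂ • (A₂.map MvPolynomial.C) ∧
      A₁ + A₂ = 1 ∧ A₁ * A₂ = 0 ∧ A₂ * A₁ = 0 := by
  have hrel : IsRelPrime f₁ f₂ := hcop
  have hr := M.mul_adjugate
  have hl := M.adjugate_mul
  rw [hadj, hdet] at hr hl
  rcases Nat.eq_zero_or_pos d₂ with hd₂ | hd₂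
  · rcases Nat.eq_zero_or_pos d₁ with hd₁ | hd₁
    · obtain rfl : d = 0 := by omega
      exact ⟨1, 0, Subsingleton.elim _ _, Subsingleton.elim _ _, Subsingleton.elim _ _,
        Subsingleton.elim _ _, Subsingleton.elim _ _⟩
    · rw [add_comm (f₂ • N₁), mul_comm f₁] at hr hl
      obtain ⟨A₂, A₁, h₂, h₁, hsum, h₂₁, h₁₂⟩ :=
        Matrix.exists_complementary_idempotents hrel.symm hf₁0 hf₁ hd₁ hlin hN₁ hr hl
      exact ⟨A₁, A₂, h₁, h₂, by rw [add_comm, hsum], h₁₂, h₂₁⟩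
  · exact Matrix.exists_complementary_idempotents hrel hf₂0 hf₂ hd₂ hlin hN₂ hr hl

/-- for a determinantal representation M of the reducible hypersurface
{f₁f₂ = 0}, a decomposition of the adjugate M^∨ = f₂N₁ + f₁N₂ into homogeneous pieces yields
constant matrices A₁, A₂ with M·Nα = fα·Aα, A₁ + A₂ = 1 and A₁A₂ = 0 = A₂A₁. -/
theorem stmt15 {k : Type*} [Field k] [IsAlgClosed k] [CharZero k] {n d d₁ d₂ : ℕ}
    (M : Matrix (Fin d) (Fin d) (MvPolynomial (Fin (n + 1)) k))
    (hlin : ∀ i j, (M i j).IsHomogeneous 1)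
    (f₁ f₂ : MvPolynomial (Fin (n + 1)) k)
    (hf₁ : f₁.IsHomogeneous d₁) (hf₂ : f₂.IsHomogeneous d₂)
    (hf₁0 : f₁ ≠ 0) (hf₂0 : f₂ ≠ 0) (hdd : d₁ + d₂ = d)
    (hcop : ∀ p : MvPolynomial (Fin (n + 1)) k, p ∣ f₁ → p ∣ f₂ → IsUnit p)
    (hdet : M.det = f₁ * f₂)
    (N₁ N₂ : Matrix (Fin d) (Fin d) (MvPolynomial (Fin (n + 1)) k))
    (hN₁ : ∀ i j, (N₁ i j).IsHomogeneous (d₁ - 1))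
    (hN₂ : ∀ i j, (N₂ i j).IsHomogeneous (d₂ - 1))
    (hadj : M.adjugate = f₂ • N₁ + f₁ • N₂) :
    ∃ A₁ A₂ : Matrix (Fin d) (Fin d) k,
      M * N₁ = f₁ • (A₁.map MvPolynomial.C) ∧
      M * N₂ = f₂ • (A₂.map MvPolynomial.C) ∧
      A₁ + A₂ = 1 ∧ A₁ * A₂ = 0 ∧ A₂ * A₁ = 0 :=
  stmt15_general M hlin f₁ f₂ hf₁ hf₂ hf₁0 hf₂0 hdd hcop hdet N₁ N₂ hN₁ hN₂ hadj
end

section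
/- Let R be a commutative local integral domain, M a d×d matrix over R with det(M) ≠ 0, and f = det(M). If g ∈ R is not a zero divisor mod f and s ∈ R^d satisfies g·s ∈ M·R^d + f·R^d, then s ∈ M·R^d + f·R^d. In other words, coker(M mod f) = (R/f)^d / M·(R/f)^d is a torsion-free R/f-module. -/
/-- coker(M mod det M) is torsion-free: if g is a non-zerodivisor modulo
f = det M and g·s ∈ M·R^d + f·R^d, then s ∈ M·R^d + f·R^d. -/
theorem stmt19 {R : Type*} [CommRing R] [IsDomain R] [IsLocalRing R] {d : ℕ}
    (M : Matrix (Fin d) (Fin d) R) (hf : M.det ≠ 0)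
    (g : R) (hg : ∀ x : R, g * x ∈ Ideal.span {M.det} → x ∈ Ideal.span {M.det})
    (s : Fin d → R)
    (hs : ∃ a b : Fin d → R, g • s = M.mulVec a + M.det • b) :
    ∃ a b : Fin d → R, s = M.mulVec a + M.det • b := by
  obtain ⟨a, b, h⟩ := hs
  set f := M.det with hfdef
  set A := M.adjugate with hA
  -- adjugate applied to the hypothesis
  have hadj : ∀ i, g * (A.mulVec s) i = f * (a i + (A.mulVec b) i) := by
    intro i
    have h1 : A.mulVec (g • s) = A.mulVec (M.mulVec a) + A.mulVec (f • b) := by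
      rw [h, Matrix.mulVec_add]
    have h2 : A.mulVec (M.mulVec a) = f • a := by
      rw [Matrix.mulVec_mulVec, hA, Matrix.adjugate_mul]
      simp [Matrix.smul_mulVec, hfdef]
    have h3 : A.mulVec (g • s) = g • A.mulVec s := Matrix.mulVec_smul A g s
    have h4 : A.mulVec (f • b) = f • A.mulVec b := Matrix.mulVec_smul A f b
    have := congrFun (h3 ▸ h2 ▸ h4 ▸ h1) i
    simpa [mul_add] using this
  -- so each component of A.mulVec s is in span {f}
  have hmem : ∀ i, (A.mulVec s) i ∈ Ideal.span {f} := by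
    intro i
    apply hg
    rw [Ideal.mem_span_singleton]
    exact ⟨a i + (A.mulVec b) i, by linear_combination hadj i⟩
  choose w hw using fun i => Ideal.mem_span_singleton'.mp (hmem i)
  -- M.mulVec (A.mulVec s) = f • s
  have key : f • s = f • M.mulVec w := by
    have h1 : M.mulVec (A.mulVec s) = f • s := by
      rw [Matrix.mulVec_mulVec, hA, Matrix.mul_adjugate]
      simp [Matrix.smul_mulVec, hfdef]
    have h2 : A.mulVec s = f • w := by
      funext i
      simpa [mul_comm] using (hw i).symm
    rw [← h1, h2, Matrix.mulVec_smul]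
  refine ⟨w, 0, ?_⟩
  funext i
  have := congrFun key i
  simp only [Pi.smul_apply, smul_eq_mul] at this
  have := mul_left_cancel₀ hf this
  simp [this]
end
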